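/- Let X^k be an A^k-valued random vector (A = Z/QZ), N_1,...,N_k i.i.d. copies of N independent of X^k, and Z_i = X_i + N_i (addition mod Q). Then for any A^k-valued random vector X̂^k jointly distributed with Z^k satisfying (1/k)Σ_i E[ρ_N(Z_i − X̂_i)] ≤ H(N), one has I(Z^k; X̂^k) ≥ H(Z^k) − k·H(N). -/

import Mathlib

open Finset Real MeasureTheory ProbabilityTheory

def IsPMF {A : Type*} [Fintype A] (p : A → ℝ) : Prop :=
  (∀ a, 0 ≤ p a) ∧ ∑ a, p a = 1

noncomputable def entH {A : Type*} [Fintype A] (p : A → ℝ) : ℝ :=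
  ∑ a, Real.negMulLog (p a)

noncomputable def rho {A : Type*} [Fintype A] (ν : A → ℝ) (a : A) : ℝ :=
  - Real.log (ν a)

/-- The PMF of a finite-alphabet random variable `V` on `(Ω, μ)`. -/
noncomputable def pmfOf {Ω A : Type*} [Fintype A] [MeasurableSpace Ω]
    (μ : Measure Ω) (V : Ω → A) : A → ℝ :=
  fun a => (μ (V ⁻¹' {a})).toReal

/-- Shannon entropy of a finite-alphabet random variable. -/
noncomputable def Hm {Ω A : Type*} [Fintype A] [MeasurableSpace Ω]
    (μ : Measure Ω) (V : Ω → A) : ℝ :=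
  entH (pmfOf μ V)

/-- Mutual information I(V;W) = H(V) + H(W) - H(V,W). -/
noncomputable def MI {Ω A B : Type*} [Fintype A] [Fintype B] [MeasurableSpace Ω]
    (μ : Measure Ω) (V : Ω → A) (W : Ω → B) : ℝ :=
  Hm μ V + Hm μ W - Hm μ (fun ω => (V ω, W ω))

section Aux

variable {Ω A B : Type*} [MeasurableSpace Ω] {μ : Measure Ω} [IsProbabilityMeasure μ]

lemma pmfOf_nonneg [Fintype A] (V : Ω → A) (a : A) : 0 ≤ pmfOf μ V a :=
  ENNReal.toReal_nonneg

lemma pmfOf_comp [Fintype A] [Fintype B] [DecidableEq B]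
    [MeasurableSpace A] [MeasurableSingletonClass A]
    {V : Ω → A} (hV : Measurable V) (f : A → B) (b : B) :
    pmfOf μ (fun ω => f (V ω)) b = ∑ a ∈ univ.filter (fun a => f a = b), pmfOf μ V a := by
  have hset : (fun ω => f (V ω)) ⁻¹' {b}
      = ⋃ a ∈ (univ.filter (fun a => f a = b) : Finset A), V ⁻¹' {a} := by
    ext ω
    simp [Set.mem_iUnion]
  have hm : ∀ a ∈ (univ.filter (fun a => f a = b) : Finset A),
      MeasurableSet (V ⁻¹' {a}) := fun a _ => hV (measurableSet_singleton a)
  have hd : Set.PairwiseDisjoint (↑(univ.filter (fun a => f a = b) : Finset A))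
      (fun a => V ⁻¹' {a}) := by
    intro x _ y _ hxy
    refine Set.disjoint_left.2 fun ω hx hy => hxy ?_
    simp only [Set.mem_preimage, Set.mem_singleton_iff] at hx hy
    rw [← hx, ← hy]
  rw [pmfOf, hset, measure_biUnion_finset hd hm,
    ENNReal.toReal_sum (fun a _ => measure_ne_top μ _)]
  rfl

lemma sum_pmfOf [Fintype A] [MeasurableSpace A] [MeasurableSingletonClass A]
    {V : Ω → A} (hV : Measurable V) : ∑ a, pmfOf μ V a = 1 := by
  classical
  have h := pmfOf_comp (μ := μ) hV (fun _ => (() : Unit)) ()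
  have h1 : pmfOf μ (fun _ : Ω => ()) () = 1 := by
    have : ((fun _ : Ω => ()) ⁻¹' {()}) = Set.univ := by ext ω; simp
    simp [pmfOf, this]
  rw [h1] at h
  simpa using h.symm

lemma isPMF_pmfOf [Fintype A] [MeasurableSpace A] [MeasurableSingletonClass A]
    {V : Ω → A} (hV : Measurable V) : IsPMF (pmfOf μ V) :=
  ⟨pmfOf_nonneg V, sum_pmfOf hV⟩

/-- Gibbs' inequality (cross-entropy bound), for a sub-probability `q`. -/
lemma gibbs {A : Type*} [Fintype A] {p q : A → ℝ} (hp : IsPMF p)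
    (hq0 : ∀ a, 0 ≤ q a) (hq1 : ∑ a, q a ≤ 1)
    (h : ∀ a, p a ≠ 0 → q a ≠ 0) :
    entH p ≤ ∑ a, p a * (- Real.log (q a)) := by
  have key : ∑ a, (p a * Real.log (q a) - p a * Real.log (p a)) ≤ 0 := by
    have hterm : ∀ a : A, p a * Real.log (q a) - p a * Real.log (p a) ≤ q a - p a := by
      intro a
      rcases eq_or_lt_of_le (hp.1 a) with hpa | hpa
      · simp [← hpa, hq0 a]
      · have hqa : 0 < q a := lt_of_le_of_ne (hq0 a) (Ne.symm (h a hpa.ne'))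
        have hlog : Real.log (q a / p a) ≤ q a / p a - 1 :=
          Real.log_le_sub_one_of_pos (div_pos hqa hpa)
        rw [Real.log_div hqa.ne' hpa.ne'] at hlog
        have := mul_le_mul_of_nonneg_left hlog (le_of_lt hpa)
        calc p a * Real.log (q a) - p a * Real.log (p a)
            = p a * (Real.log (q a) - Real.log (p a)) := by ring
          _ ≤ p a * (q a / p a - 1) := this
          _ = q a - p a := by field_simp
    calc ∑ a, (p a * Real.log (q a) - p a * Real.log (p a))
        ≤ ∑ a, (q a - p a) := Finset.sum_le_sum fun a _ => hterm a
      _ = (∑ a, q a) - 1 := by rw [Finset.sum_sub_distrib, hp.2]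
      _ ≤ 0 := by linarith
  have : entH p = ∑ a, (- (p a * Real.log (p a))) := by
    simp [entH, Real.negMulLog, neg_mul]
  rw [this]
  have : ∑ a, p a * (- Real.log (q a)) = ∑ a, (- (p a * Real.log (q a))) := by
    simp [mul_neg]
  rw [this, Finset.sum_neg_distrib, Finset.sum_neg_distrib]
  have := Finset.sum_sub_distrib (s := (univ : Finset A))
    (f := fun a => p a * Real.log (q a)) (g := fun a => p a * Real.log (p a))
  linarith [key, this]

/-- Entropy is invariant under composition with a bijection. -/
lemma Hm_equiv [Fintype A] [Fintype B] (e : A ≃ B) (V : Ω → A) :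
    Hm μ (fun ω => e (V ω)) = Hm μ V := by
  have hp : ∀ b, pmfOf μ (fun ω => e (V ω)) b = pmfOf μ V (e.symm b) := by
    intro b
    have hset : (fun ω => e (V ω)) ⁻¹' {b} = V ⁻¹' {e.symm b} := by
      ext ω
      simp only [Set.mem_preimage, Set.mem_singleton_iff]
      exact (Equiv.eq_symm_apply e).symm
    simp only [pmfOf, hset]
  unfold Hm entH
  calc ∑ b, Real.negMulLog (pmfOf μ (fun ω => e (V ω)) b)
      = ∑ b, Real.negMulLog (pmfOf μ V (e.symm b)) := by simp_rw [hp]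
    _ = ∑ a, Real.negMulLog (pmfOf μ V a) := Equiv.sum_comp e.symm (fun a => Real.negMulLog (pmfOf μ V a))

lemma pmfOf_fst [Fintype A] [Fintype B] [DecidableEq A]
    [MeasurableSpace A] [MeasurableSingletonClass A]
    [MeasurableSpace B] [MeasurableSingletonClass B]
    {V : Ω → A} {W : Ω → B} (hV : Measurable V) (hW : Measurable W) (a : A) :
    pmfOf μ V a = ∑ b, pmfOf μ (fun ω => (V ω, W ω)) (a, b) := by
  have h := pmfOf_comp (μ := μ) (hV.prodMk hW) Prod.fst a
  rw [show (fun ω => Prod.fst (V ω, W ω)) = V from rfl] at h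
  rw [h, Finset.sum_filter, Fintype.sum_prod_type, Finset.sum_comm]
  refine (Finset.sum_congr rfl fun b _ => ?_).symm
  rw [Finset.sum_ite_eq' univ a (fun x => pmfOf μ (fun ω => (V ω, W ω)) (x, b))]
  simp

lemma pmfOf_snd [Fintype A] [Fintype B] [DecidableEq B]
    [MeasurableSpace A] [MeasurableSingletonClass A]
    [MeasurableSpace B] [MeasurableSingletonClass B]
    {V : Ω → A} {W : Ω → B} (hV : Measurable V) (hW : Measurable W) (b : B) :
    pmfOf μ W b = ∑ a, pmfOf μ (fun ω => (V ω, W ω)) (a, b) := by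
  have h := pmfOf_comp (μ := μ) (hV.prodMk hW) Prod.snd b
  rw [show (fun ω => Prod.snd (V ω, W ω)) = W from rfl] at h
  rw [h, Finset.sum_filter, Fintype.sum_prod_type]
  refine (Finset.sum_congr rfl fun a _ => ?_).symm
  rw [Finset.sum_ite_eq' univ b (fun y => pmfOf μ (fun ω => (V ω, W ω)) (a, y))]
  simp

/-- Subadditivity of entropy: `H(V, W) ≤ H(V) + H(W)`. -/
lemma Hm_pair_le [Fintype A] [Fintype B]
    [MeasurableSpace A] [MeasurableSingletonClass A]
    [MeasurableSpace B] [MeasurableSingletonClass B]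
    {V : Ω → A} {W : Ω → B} (hV : Measurable V) (hW : Measurable W) :
    Hm μ (fun ω => (V ω, W ω)) ≤ Hm μ V + Hm μ W := by
  classical
  set p := pmfOf μ (fun ω => (V ω, W ω)) with hpdef
  have hpm : IsPMF p := isPMF_pmfOf (hV.prodMk hW)
  set q : A × B → ℝ := fun x => pmfOf μ V x.1 * pmfOf μ W x.2 with hqdef
  have hfst : ∀ x : A × B, p x ≤ pmfOf μ V x.1 := by
    intro ⟨a, b⟩
    rw [pmfOf_fst hV hW a]
    exact Finset.single_le_sum (f := fun b => p (a, b))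
      (fun b _ => hpm.1 _) (Finset.mem_univ b)
  have hsnd : ∀ x : A × B, p x ≤ pmfOf μ W x.2 := by
    intro ⟨a, b⟩
    rw [pmfOf_snd hV hW b]
    exact Finset.single_le_sum (f := fun a => p (a, b))
      (fun a _ => hpm.1 _) (Finset.mem_univ a)
  have hq0 : ∀ x, 0 ≤ q x := fun x => mul_nonneg (pmfOf_nonneg _ _) (pmfOf_nonneg _ _)
  have hq1 : ∑ x, q x ≤ 1 := by
    rw [hqdef]
    rw [Fintype.sum_prod_type]
    simp_rw [← Finset.mul_sum, ← Finset.sum_mul, sum_pmfOf hV, sum_pmfOf hW]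
    simp
  have hsupp : ∀ x, p x ≠ 0 → q x ≠ 0 := by
    intro x hx
    have h1 : 0 < p x := lt_of_le_of_ne (hpm.1 x) (Ne.symm hx)
    exact (mul_pos (lt_of_lt_of_le h1 (hfst x)) (lt_of_lt_of_le h1 (hsnd x))).ne'
  have hg := gibbs hpm hq0 hq1 hsupp
  have hrw : ∑ x, p x * (- Real.log (q x))
      = ∑ x, (p x * (- Real.log (pmfOf μ V x.1)) + p x * (- Real.log (pmfOf μ W x.2))) := by
    refine Finset.sum_congr rfl fun x _ => ?_
    rcases eq_or_lt_of_le (hpm.1 x) with hpx | hpx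
    · simp [← hpx]
    · have h1 : 0 < pmfOf μ V x.1 := lt_of_lt_of_le hpx (hfst x)
      have h2 : 0 < pmfOf μ W x.2 := lt_of_lt_of_le hpx (hsnd x)
      rw [hqdef]
      simp only
      rw [Real.log_mul h1.ne' h2.ne']
      ring
  rw [hrw, Finset.sum_add_distrib] at hg
  have hV' : ∑ x : A × B, p x * (- Real.log (pmfOf μ V x.1)) = Hm μ V := by
    unfold Hm entH
    rw [Fintype.sum_prod_type]
    refine Finset.sum_congr rfl fun a _ => ?_
    have h1 : ∑ b, p (a, b) * (- Real.log (pmfOf μ V (a, b).1))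
        = (∑ b, p (a, b)) * (- Real.log (pmfOf μ V a)) := by
      rw [Finset.sum_mul]
    rw [h1, ← pmfOf_fst hV hW a, Real.negMulLog]
    ring
  have hW' : ∑ x : A × B, p x * (- Real.log (pmfOf μ W x.2)) = Hm μ W := by
    unfold Hm entH
    rw [Fintype.sum_prod_type, Finset.sum_comm]
    refine Finset.sum_congr rfl fun b _ => ?_
    have h1 : ∑ a, p (a, b) * (- Real.log (pmfOf μ W (a, b).2))
        = (∑ a, p (a, b)) * (- Real.log (pmfOf μ W b)) := by
      rw [Finset.sum_mul]
    rw [h1, ← pmfOf_snd hV hW b, Real.negMulLog]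
    ring
  rw [hV', hW'] at hg
  exact hg

/-- Regrouping a sum over values of `V` by the fibers of `f`. -/
lemma sum_pmfOf_mul_comp [Fintype A] [Fintype B] [DecidableEq B]
    [MeasurableSpace A] [MeasurableSingletonClass A]
    {V : Ω → A} (hV : Measurable V) (f : A → B) (g : B → ℝ) :
    ∑ a, pmfOf μ V a * g (f a) = ∑ b, pmfOf μ (fun ω => f (V ω)) b * g b := by
  rw [← Finset.sum_fiberwise univ f (fun a => pmfOf μ V a * g (f a))]
  refine Finset.sum_congr rfl fun b _ => ?_
  rw [pmfOf_comp (μ := μ) hV f b, Finset.sum_mul]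
  refine Finset.sum_congr rfl fun a ha => ?_
  rw [(Finset.mem_filter.1 ha).2]

end Aux

/-- Converse bound: for Z^k = X^k + N^k (N i.i.d. full-support, independent of X^k),
any reconstruction X̂^k meeting the average distortion constraint
(1/k)∑ᵢ E[ρ_N(Zᵢ - X̂ᵢ)] ≤ H(N) satisfies I(Z^k; X̂^k) ≥ H(Z^k) - k·H(N). -/
theorem mutualInfo_ge_of_distortion_le
    {Ω : Type*} [MeasurableSpace Ω] (μ : Measure Ω) [IsProbabilityMeasure μ]
    (Q k : ℕ) [NeZero Q] (hk : 0 < k)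
    (ν : ZMod Q → ℝ) (hν : IsPMF ν) (hpos : ∀ a, 0 < ν a)
    (X Nv Xh : Ω → Fin k → ZMod Q)
    (hXmeas : Measurable X) (hNmeas : Measurable Nv) (hXhmeas : Measurable Xh)
    (hNpmf : ∀ i, pmfOf μ (fun ω => Nv ω i) = ν)
    (hNiid : iIndepFun (fun i ω => Nv ω i) μ)
    (hindep : IndepFun X Nv μ)
    (Z : Ω → Fin k → ZMod Q) (hZ : Z = fun ω i => X ω i + Nv ω i)
    (hdist : (1 / (k : ℝ)) * ∑ i : Fin k,
        ∑ a : ZMod Q, pmfOf μ (fun ω => Z ω i - Xh ω i) a * rho ν a ≤ entH ν) :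
    MI μ Z Xh ≥ Hm μ Z - (k : ℝ) * entH ν := by
  classical
  have hZmeas : Measurable Z := by
    rw [hZ]
    exact measurable_pi_lambda _ fun i =>
      ((measurable_pi_apply i).comp hXmeas).add ((measurable_pi_apply i).comp hNmeas)
  set W : Ω → (Fin k → ZMod Q) := fun ω => Z ω - Xh ω with hWdef
  have hWmeas : Measurable W := hZmeas.sub hXhmeas
  -- Step A: H(Z, Xh) = H(Xh, W) via a bijection
  let e : ((Fin k → ZMod Q) × (Fin k → ZMod Q)) ≃ ((Fin k → ZMod Q) × (Fin k → ZMod Q)) :=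
    { toFun := fun p => (p.2, p.1 - p.2)
      invFun := fun p => (p.2 + p.1, p.1)
      left_inv := fun p => by simp
      right_inv := fun p => by simp }
  have hA : Hm μ (fun ω => (Z ω, Xh ω)) = Hm μ (fun ω => (Xh ω, W ω)) := by
    have := Hm_equiv (μ := μ) e (fun ω => (Z ω, Xh ω))
    rw [← this]
    rfl
  -- Step B: subadditivity
  have hB : Hm μ (fun ω => (Xh ω, W ω)) ≤ Hm μ Xh + Hm μ W :=
    Hm_pair_le hXhmeas hWmeas
  -- Step C: Gibbs bound on H(W)
  set pW := pmfOf μ W with hpWdef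
  have hpWm : IsPMF pW := isPMF_pmfOf hWmeas
  set q : (Fin k → ZMod Q) → ℝ := fun w => ∏ i, ν (w i) with hqdef
  have hq0 : ∀ w, 0 ≤ q w := fun w => Finset.prod_nonneg fun i _ => (hpos _).le
  have hq1 : ∑ w, q w ≤ 1 := by
    have h := Finset.prod_univ_sum (fun _ : Fin k => (univ : Finset (ZMod Q)))
      (fun _ a => ν a)
    simp only [Fintype.piFinset_univ] at h
    have h2 : ∑ w, q w = ∏ _i : Fin k, ∑ a, ν a := by
      rw [h]
    rw [h2]
    simp [hν.2]
  have hsupp : ∀ w, pW w ≠ 0 → q w ≠ 0 := fun w _ =>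
    (Finset.prod_pos fun i _ => hpos _).ne'
  have hlogq : ∀ w : Fin k → ZMod Q, - Real.log (q w) = ∑ i, rho ν (w i) := by
    intro w
    rw [hqdef]
    simp only
    rw [Real.log_prod (fun i _ => (hpos _).ne')]
    simp [rho]
  have hC : Hm μ W ≤ ∑ i : Fin k, ∑ a : ZMod Q, pmfOf μ (fun ω => W ω i) a * rho ν a := by
    have hg := gibbs hpWm hq0 hq1 hsupp
    have hrw : ∑ w, pW w * (- Real.log (q w))
        = ∑ i : Fin k, ∑ w, pW w * rho ν (w i) := by
      calc ∑ w, pW w * (- Real.log (q w))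
          = ∑ w, ∑ i, pW w * rho ν (w i) := by
            refine Finset.sum_congr rfl fun w _ => ?_
            rw [hlogq w, Finset.mul_sum]
        _ = ∑ i, ∑ w, pW w * rho ν (w i) := Finset.sum_comm
    rw [hrw] at hg
    refine le_trans hg (le_of_eq ?_)
    refine Finset.sum_congr rfl fun i _ => ?_
    exact sum_pmfOf_mul_comp hWmeas (fun w => w i) (rho ν)
  -- Step D: distortion constraint
  have hD : ∑ i : Fin k, ∑ a : ZMod Q, pmfOf μ (fun ω => W ω i) a * rho ν a
      ≤ (k : ℝ) * entH ν := by
    have hWZ : ∀ i, (fun ω => W ω i) = (fun ω => Z ω i - Xh ω i) := by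
      intro i; funext ω; simp [hWdef]
    have h2 : ∑ i : Fin k, ∑ a : ZMod Q, pmfOf μ (fun ω => W ω i) a * rho ν a
        = ∑ i : Fin k, ∑ a : ZMod Q, pmfOf μ (fun ω => Z ω i - Xh ω i) a * rho ν a := by
      refine Finset.sum_congr rfl fun i _ => ?_
      rw [hWZ i]
    rw [h2]
    have hk' : (0 : ℝ) < k := Nat.cast_pos.2 hk
    rw [one_div] at hdist
    calc ∑ i : Fin k, ∑ a : ZMod Q, pmfOf μ (fun ω => Z ω i - Xh ω i) a * rho ν a
        = (k : ℝ) * ((k : ℝ)⁻¹ * ∑ i : Fin k, ∑ a : ZMod Q,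
            pmfOf μ (fun ω => Z ω i - Xh ω i) a * rho ν a) := by
          field_simp
      _ ≤ (k : ℝ) * entH ν := by
          exact mul_le_mul_of_nonneg_left hdist hk'.le
  -- Conclude
  unfold MI
  have : Hm μ (fun ω => (Z ω, Xh ω)) ≤ Hm μ Xh + (k : ℝ) * entH ν := by
    rw [hA]
    linarith
  linarith
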